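/- arXiv:2604.10526 — 5 statements merged into one kernel-verified Lean document; each statement's English description precedes it below -/
import Mathlib

section
/- Let V be a Banach k-vector space. Then every orthonormal Schauder basis of V has cardinality equal to rank(V). -/
open Cardinal Set
open scoped ENNReal

universe u

noncomputable section

section BasicDefs

variable (k : Type u) [NormedField k]

/-- A family of coefficients is `c₀` if for every `ε > 0` only finitely many entries
have norm `≥ ε`. -/
def IsC0Family {E : Type*} (c : E → k) : Prop :=
  ∀ ε : ℝ, 0 < ε → {e : E | ε ≤ ‖c e‖}.Finite

variable (V : Type u) [SeminormedAddCommGroup V] [NormedSpace k V]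

/-- `E` is an orthonormal Schauder basis of `V`:
(i) every element of `E` has norm one;
(ii) every `c₀` family of coefficients gives a convergent sum whose norm is the
supremum of the norms of the coefficients;
(iii) every vector is such a sum. -/
def IsOrthonormalSchauderBasis (E : Set V) : Prop :=
  (∀ e ∈ E, ‖e‖ = 1) ∧
  (∀ c : E → k, IsC0Family k c →
    ∃ s : V, HasSum (fun e : E => c e • (e : V)) s ∧ ‖s‖ = ⨆ e : E, ‖c e‖) ∧
  (∀ v : V, ∃ c : E → k, IsC0Family k c ∧ HasSum (fun e : E => c e • (e : V)) v)

/-- A Banach `k`-vector space is free if it admits an orthonormal Schauder basis. -/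
def IsFreeBanach : Prop := ∃ E : Set V, IsOrthonormalSchauderBasis k V E

variable {V}

/-- The closed `k`-linear span of a set. -/
def closedSpan (S : Set V) : Submodule k V := (Submodule.span k S).topologicalClosure

variable (V)

/-- The rank of `V`: the least cardinality of a subset whose closed linear span is `V`. -/
def bRank : Cardinal.{u} := sInf {c : Cardinal.{u} | ∃ S : Set V, #S = c ∧ closedSpan k S = ⊤}

variable {V}

/-- Freeness of a closed subspace, viewed as a Banach space in its own right. -/
def IsFreeSub (W : Submodule k V) : Prop := IsFreeBanach k W

variable (V)

/-- `V` is `κ`-free if every closed subspace of the form `⟨S⟩` with `#S < κ` is free. -/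
def IsKappaFree (κ : Cardinal.{u}) : Prop :=
  ∀ S : Set V, #S < κ → IsFreeSub k (closedSpan k S)

/-- `V` is almost free if it is `rank(V)`-free. -/
def IsAlmostFree : Prop := IsKappaFree k V (bRank k V)

variable {V}

/-- Membership in `ℒ_{<κ}(V)`, the collection of closed spans of sets of cardinality `< κ`. -/
def MemL (κ : Cardinal.{u}) (W : Submodule k V) : Prop :=
  ∃ S : Set V, #S < κ ∧ W = closedSpan k S

/-- A free filtration of `V`, indexed by the ordinals below `(rank V).ord`. -/
def IsFreeFiltration (𝒱 : Ordinal.{u} → Submodule k V) : Prop :=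
  (∀ α < (bRank k V).ord, MemL k (bRank k V) (𝒱 α)) ∧
  (∀ α < (bRank k V).ord, IsFreeSub k (𝒱 α)) ∧
  (∀ α < (bRank k V).ord, ∀ β < α, 𝒱 β ≤ 𝒱 α) ∧
  (∀ α < (bRank k V).ord, Order.IsSuccLimit α →
    𝒱 α = closedSpan k (⋃ β ∈ Set.Iio α, ((𝒱 β : Submodule k V) : Set V))) ∧
  (∀ v : V, ∃ α < (bRank k V).ord, v ∈ 𝒱 α)

/-- `Wp` is a free supplement of `W` in `V`: `Wp` is a free closed subspace and the
canonical map `W ⊕ Wp → V` is an isometric isomorphism (for the max norm). -/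
def IsFreeSupplement (W Wp : Submodule k V) : Prop :=
  IsClosed (Wp : Set V) ∧ IsFreeSub k Wp ∧
  (∀ w ∈ W, ∀ w' ∈ Wp, ‖w + w'‖ = max ‖w‖ ‖w'‖) ∧
  (∀ v : V, ∃ w ∈ W, ∃ w' ∈ Wp, v = w + w')

/-- `W` is a cofree direct summand of `V` if it admits a free supplement. -/
def IsCofreeSummand (W : Submodule k V) : Prop := ∃ Wp, IsFreeSupplement k W Wp

/-- `W` is an almost cofree direct summand of `V` if it is a cofree direct summand of
every member of `ℒ_{<rank V}(V)` containing it. -/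
def IsAlmostCofreeSummand (W : Submodule k V) : Prop :=
  ∀ W' : Submodule k V, MemL k (bRank k V) W' → W ≤ W' →
    IsCofreeSummand k (W.comap W'.subtype)

end BasicDefs

section SetTheory

/-- `C` is a club (closed unbounded) subset of the ordinals below `o`. -/
def IsClubIn (C : Set Ordinal.{u}) (o : Ordinal.{u}) : Prop :=
  C ⊆ Set.Iio o ∧
  (∀ α < o, 0 < α → (∀ β < α, ∃ γ ∈ C, β < γ ∧ γ < α) → α ∈ C) ∧
  (∀ α < o, ∃ γ ∈ C, α < γ)

/-- `S` is stationary below `o`: it meets every club subset of the ordinals below `o`. -/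
def IsStationaryIn (S : Set Ordinal.{u}) (o : Ordinal.{u}) : Prop :=
  ∀ C : Set Ordinal.{u}, IsClubIn C o → (S ∩ C).Nonempty

/-- A filter is `λ`-complete if it is closed under intersections of fewer than `λ`
of its members. -/
def IsLambdaCompleteFilter {I : Type u} (lam : Cardinal.{u}) (F : Filter I) : Prop :=
  ∀ S : Set (Set I), #S < lam → (∀ A ∈ S, A ∈ F) → ⋂₀ S ∈ F

/-- `κ` is `λ`-strongly compact: `κ ≥ ℵ₁` and every `κ`-complete (proper) filter on a set
of cardinality `κ` extends to a `λ`-complete ultrafilter. -/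
def IsLambdaStronglyCompact (κ lam : Cardinal.{u}) : Prop :=
  Cardinal.aleph 1 ≤ κ ∧
  ∀ (I : Type u) (F : Filter I), #I = κ → F.NeBot →
    IsLambdaCompleteFilter κ F →
    ∃ U : Ultrafilter I, F ≤ ↑U ∧ IsLambdaCompleteFilter lam (↑U : Filter I)

/-- `κ` is weakly compact: `κ ≥ ℵ₁` and every 2-colouring of the 2-element subsets of a
set of cardinality `κ` has a homogeneous subset of cardinality `κ`. -/
def IsWeaklyCompactCard (κ : Cardinal.{u}) : Prop :=
  Cardinal.aleph 1 ≤ κ ∧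
  ∀ f : Set κ.out → Bool, ∃ S : Set κ.out, #S = κ ∧ ∃ b : Bool,
    ∀ x ∈ S, ∀ y ∈ S, x ≠ y → f {x, y} = b

end SetTheory

section ValuationRing

variable (k : Type u) [NormedField k] [IsUltrametricDist k]

/-- The valuation ring `O_k = {c : ‖c‖ ≤ 1}` of `k`, as an additive subgroup. -/
def okAddSubgroup : AddSubgroup k where
  carrier := {c : k | ‖c‖ ≤ 1}
  zero_mem' := by simp
  add_mem' {a b} ha hb := le_trans (IsUltrametricDist.norm_add_le_max a b)
    (max_le ha hb)
  neg_mem' {a} ha := by simpa using ha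

/-- `λ_k`: the successor cardinal of `max {#(k/O_k), ℵ₀}`. -/
def lambdaK : Cardinal.{u} := Order.succ (max #(k ⧸ okAddSubgroup k) Cardinal.aleph0)

end ValuationRing

end

section AuxProof

variable {k : Type u} [NormedField k] [IsUltrametricDist k]
variable {V : Type u} [NormedAddCommGroup V] [IsUltrametricDist V] [NormedSpace k V]

lemma IsC0Family.bddAbove {E : Type u} {c : E → k} (hc : IsC0Family k c) :
    BddAbove (Set.range fun e => ‖c e‖) := by
  have hF := hc 1 one_pos
  refine ⟨max 1 ↑(hF.toFinset.sup fun e => ‖c e‖₊), ?_⟩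
  rintro x ⟨e, rfl⟩
  rcases le_or_gt 1 ‖c e‖ with h | h
  · refine le_max_of_le_right ?_
    have he : e ∈ hF.toFinset := hF.mem_toFinset.2 h
    calc ‖c e‖ = ((‖c e‖₊ : ℝ)) := rfl
      _ ≤ _ := NNReal.coe_le_coe.2 (Finset.le_sup (f := fun e => ‖c e‖₊) he)
  · exact le_max_of_le_left h.le

lemma IsC0Family.sub' {E : Type u} {c c' : E → k} (hc : IsC0Family k c)
    (hc' : IsC0Family k c') : IsC0Family k (c - c') := by
  intro ε hε
  refine ((hc ε hε).union (hc' ε hε)).subset ?_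
  intro e he
  have h1 : ε ≤ ‖c e - c' e‖ := he
  have h2 : ‖c e - c' e‖ ≤ max ‖c e‖ ‖c' e‖ := by
    have := IsUltrametricDist.norm_add_le_max (c e) (-(c' e))
    rw [norm_neg] at this
    rwa [sub_eq_add_neg]
  rcases le_max_iff.1 (h1.trans h2) with h | h
  · exact Or.inl h
  · exact Or.inr h

lemma IsC0Family.add' {E : Type u} {c c' : E → k} (hc : IsC0Family k c)
    (hc' : IsC0Family k c') : IsC0Family k (c + c') := by
  intro ε hε
  refine ((hc ε hε).union (hc' ε hε)).subset ?_
  intro e he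
  have h1 : ε ≤ ‖c e + c' e‖ := he
  have h2 : ‖c e + c' e‖ ≤ max ‖c e‖ ‖c' e‖ :=
    IsUltrametricDist.norm_add_le_max (c e) (c' e)
  rcases le_max_iff.1 (h1.trans h2) with h | h
  · exact Or.inl h
  · exact Or.inr h

lemma IsC0Family.smul' {E : Type u} {c : E → k} (hc : IsC0Family k c) (a : k) :
    IsC0Family k (a • c) := by
  intro ε hε
  rcases eq_or_ne a 0 with rfl | ha
  · refine Set.Finite.subset (Set.finite_empty) ?_
    intro e he
    simp only [Pi.smul_apply, zero_smul, norm_zero, Set.mem_setOf_eq] at he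
    exact absurd (lt_of_lt_of_le hε he) (lt_irrefl 0)
  · have hapos : 0 < ‖a‖ := norm_pos_iff.2 ha
    refine (hc (ε / ‖a‖) (div_pos hε hapos)).subset ?_
    intro e he
    have : ε ≤ ‖a‖ * ‖c e‖ := by simpa [norm_mul] using he
    exact (div_le_iff₀' hapos).2 this

lemma IsC0Family.countable_support {E : Type u} {c : E → k} (hc : IsC0Family k c) :
    {e : E | c e ≠ 0}.Countable := by
  have : {e : E | c e ≠ 0} ⊆ ⋃ n : ℕ, {e : E | 1 / (n + 1 : ℝ) ≤ ‖c e‖} := by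
    intro e he
    obtain ⟨n, hn⟩ := exists_nat_one_div_lt (norm_pos_iff.2 he)
    exact Set.mem_iUnion.2 ⟨n, hn.le⟩
  refine (Set.countable_iUnion fun n => ?_).mono this
  exact (hc _ (by positivity)).countable

variable [CompleteSpace k] [CompleteSpace V]

lemma coeff_unique {E : Set V} (hE : IsOrthonormalSchauderBasis k V E)
    {c c' : E → k} (hc : IsC0Family k c) (hc' : IsC0Family k c') {v : V}
    (h : HasSum (fun e : E => c e • (e : V)) v)
    (h' : HasSum (fun e : E => c' e • (e : V)) v) : c = c' := by
  have hd : IsC0Family k (c - c') := hc.sub' hc'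
  have hs : HasSum (fun e : E => (c - c') e • (e : V)) 0 := by
    have := h.sub h'
    simpa [sub_smul] using this
  obtain ⟨s, hssum, hnorm⟩ := hE.2.1 _ hd
  have hs0 : s = 0 := hssum.unique hs
  funext e
  have hle : ‖(c - c') e‖ ≤ ⨆ e, ‖(c - c') e‖ := le_ciSup hd.bddAbove e
  rw [← hnorm, hs0, norm_zero] at hle
  have := le_antisymm hle (norm_nonneg _)
  simpa [sub_eq_zero] using norm_eq_zero.1 this

end AuxProof

section Statement

variable (k : Type u) [NormedField k] [IsUltrametricDist k] [CompleteSpace k]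
variable (V : Type u) [NormedAddCommGroup V] [IsUltrametricDist V]
  [NormedSpace k V] [CompleteSpace V]

/-- Every orthonormal Schauder basis of a Banach `k`-vector space `V` has
cardinality `rank V`. -/
theorem orthonormalSchauderBasis_card_eq_bRank
    (E : Set V) (hE : IsOrthonormalSchauderBasis k V E) :
    #E = bRank k V := by
  classical
  obtain ⟨h1, h2, h3⟩ := id hE
  choose co hco0 hcosum using h3
  -- every coefficient is bounded by the norm
  have hnorm : ∀ (v : V) (e : E), ‖co v e‖ ≤ ‖v‖ := by
    intro v e
    obtain ⟨s, hs, hn⟩ := h2 _ (hco0 v)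
    rw [hs.unique (hcosum v)] at hn
    rw [hn]
    exact le_ciSup (hco0 v).bddAbove e
  -- additivity and homogeneity of coefficients
  have hadd : ∀ v w : V, co (v + w) = co v + co w := by
    intro v w
    refine coeff_unique hE (hco0 _) ((hco0 v).add' (hco0 w)) (hcosum _) ?_
    have := (hcosum v).add (hcosum w)
    simpa [add_smul] using this
  have hsmul : ∀ (a : k) (v : V), co (a • v) = a • co v := by
    intro a v
    refine coeff_unique hE (hco0 _) ((hco0 v).smul' a) (hcosum _) ?_
    have := (hcosum v).const_smul a
    simpa [smul_smul] using this
  -- coefficients of basis vectors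
  have hdelta : ∀ e : E, co e = fun e' => if e' = e then (1 : k) else 0 := by
    intro e
    refine coeff_unique hE (hco0 _) ?_ (hcosum _) ?_
    · intro ε hε
      exact (Set.finite_singleton e).subset fun e' he' => by
        by_contra h
        simp only [Set.mem_singleton_iff] at h
        simp only [Set.mem_setOf_eq, if_neg h, norm_zero] at he'
        exact absurd (lt_of_lt_of_le hε he') (lt_irrefl 0)
    · have hfun : (fun e' : E => (if e' = e then (1 : k) else 0) • (e' : V)) =
          fun e' : E => if e' = e then (e : V) else 0 := by
        funext e'
        by_cases h : e' = e <;> simp [h]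
      rw [hfun]
      exact hasSum_ite_eq e (e : V)
  -- the coefficient functionals
  let φ : E → V →L[k] k := fun e =>
    LinearMap.mkContinuous
      { toFun := fun v => co v e
        map_add' := fun v w => by
          show co (v + w) e = co v e + co w e
          rw [hadd]; rfl
        map_smul' := fun a v => by
          show co (a • v) e = a • co v e
          rw [hsmul]; rfl } 1
      (fun v => by simpa using hnorm v e)
  have hφ_apply : ∀ (e : E) (v : V), φ e v = co v e := fun _ _ => rfl
  -- linear independence of E
  have hli : LinearIndependent k (fun e : E => (e : V)) := by
    rw [linearIndependent_iff]
    intro l hl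
    ext e
    have h0 : (l.sum fun e' a => a * co (e' : V) e) = 0 := by
      have h0 : φ e (Finsupp.linearCombination k (fun e : E => (e : V)) l) = 0 := by
        rw [hl]; simp
      rw [Finsupp.linearCombination_apply, map_finsuppSum] at h0
      simpa only [hφ_apply, hsmul, Pi.smul_apply, smul_eq_mul] using h0
    rw [Finsupp.sum, Finset.sum_eq_single e
      (fun e' _ hne => by simp [hdelta e', show e ≠ e' from fun h => hne h.symm])
      (fun h => by simp [Finsupp.notMem_support_iff.1 h])] at h0
    rw [hdelta e] at h0
    simpa using h0
  -- E spans a dense subspace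
  have hspanE : closedSpan k E = ⊤ := by
    rw [eq_top_iff]
    intro v _
    have hv : v ∈ closure ((Submodule.span k E : Submodule k V) : Set V) := by
      refine mem_closure_of_tendsto (hcosum v) ?_
      filter_upwards with F
      exact Submodule.sum_mem _ fun e _ =>
        Submodule.smul_mem _ _ (Submodule.subset_span e.2)
    exact hv
  have hbr_le : bRank k V ≤ #E := csInf_le' ⟨E, rfl, hspanE⟩
  -- the rank is attained by some set S
  have hne : {c : Cardinal.{u} | ∃ S : Set V, #S = c ∧ closedSpan k S = ⊤}.Nonempty := by
    refine ⟨#(Set.univ : Set V), Set.univ, rfl, ?_⟩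
    rw [eq_top_iff]
    intro v _
    have : v ∈ (Submodule.span k (Set.univ : Set V)) := by
      rw [Submodule.span_univ]; trivial
    exact Submodule.le_topologicalClosure _ this
  obtain ⟨S, hScard, hSspan⟩ := csInf_mem hne
  -- every basis vector is supported on some element of S
  have hsupp : ∀ e : E, ∃ s ∈ S, co s e ≠ 0 := by
    intro e
    by_contra h
    push_neg at h
    have hle : Submodule.span k S ≤ LinearMap.ker (φ e : V →ₗ[k] k) := by
      rw [Submodule.span_le]
      intro s hs
      simp only [SetLike.mem_coe, LinearMap.mem_ker, ContinuousLinearMap.coe_coe, hφ_apply]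
      exact h s hs
    have hcl : (Submodule.span k S).topologicalClosure ≤ LinearMap.ker (φ e : V →ₗ[k] k) :=
      Submodule.topologicalClosure_minimal _ hle (ContinuousLinearMap.isClosed_ker _)
    have hmem : (e : V) ∈ (Submodule.span k S).topologicalClosure := by
      have : closedSpan k S = (Submodule.span k S).topologicalClosure := rfl
      rw [← this, hSspan]; trivial
    have h0 : φ e (e : V) = 0 := hcl hmem
    rw [hφ_apply, hdelta e] at h0
    simp at h0
  -- now prove #E ≤ #S
  have hES : #E ≤ #S := by
    rcases S.finite_or_infinite with hSfin | hSinf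
    · -- finite case: the span of S is closed, hence equals V
      have hclosed : IsClosed ((Submodule.span k S : Submodule k V) : Set V) := by
        by_cases htriv : ∃ x : k, 1 < ‖x‖
        · letI : NontriviallyNormedField k :=
            { ‹NormedField k› with non_trivial := htriv }
          haveI : FiniteDimensional k (Submodule.span k S) :=
            FiniteDimensional.span_of_finite k hSfin
          exact Submodule.closed_of_finiteDimensional _
        · -- trivial norm: nonzero vectors have norm at least 1
          push_neg at htriv
          have hbig : ∀ v : V, v ≠ 0 → 1 ≤ ‖v‖ := by
            intro v hv
            have hcv : co v ≠ 0 := by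
              intro hc
              apply hv
              have := hcosum v
              rw [hc] at this
              simp only [Pi.zero_apply, zero_smul] at this
              exact (this.unique hasSum_zero)
            obtain ⟨e, he⟩ := Function.ne_iff.1 hcv
            have h1 : ‖co v e‖ = 1 := by
              have hle1 : ‖co v e‖ ≤ 1 := htriv _
              have hinv : ‖(co v e)⁻¹‖ ≤ 1 := htriv _
              have : ‖co v e‖ * ‖(co v e)⁻¹‖ = 1 := by
                rw [← norm_mul, mul_inv_cancel₀ (by simpa using he)]
                simp
              have hge : 1 ≤ ‖co v e‖ := by
                nlinarith [mul_nonneg (norm_nonneg (co v e)) (sub_nonneg.2 hinv)]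
              exact le_antisymm hle1 hge
            calc (1 : ℝ) = ‖co v e‖ := h1.symm
              _ ≤ ‖v‖ := hnorm v e
          refine isClosed_of_closure_subset ?_
          intro v hv
          obtain ⟨w, hw, hd⟩ := Metric.mem_closure_iff.1 hv 1 one_pos
          have : v = w := by
            by_contra hne
            have : (1 : ℝ) ≤ ‖v - w‖ := hbig _ (sub_ne_zero.2 hne)
            rw [dist_eq_norm] at hd
            linarith
          rwa [this]
      have hspan : Submodule.span k S = ⊤ := by
        have := hSspan
        rw [show closedSpan k S = (Submodule.span k S).topologicalClosure from rfl,
          hclosed.submodule_topologicalClosure_eq] at this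
        exact this
      calc #E ≤ Module.rank k V := hli.cardinal_le_rank
        _ = Module.rank k (Submodule.span k S) := by rw [hspan, rank_top]
        _ ≤ #S := rank_span_le (R := k) S
    · -- infinite case: count supports
      have hcov : E ⊆ ⋃ s : S, (Subtype.val '' {e : E | co (s : V) e ≠ 0}) := by
        intro v hv
        obtain ⟨s, hs, hsne⟩ := hsupp ⟨v, hv⟩
        exact Set.mem_iUnion.2 ⟨⟨s, hs⟩, ⟨v, hv⟩, hsne, rfl⟩
      have hcount : ∀ s : S, #(Subtype.val '' {e : E | co (s : V) e ≠ 0}) ≤ ℵ₀ := by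
        intro s
        have : (Subtype.val '' {e : E | co (s : V) e ≠ 0}).Countable :=
          ((hco0 (s : V)).countable_support).image _
        exact this.le_aleph0
      calc #E ≤ #(⋃ s : S, (Subtype.val '' {e : E | co (s : V) e ≠ 0})) :=
            Cardinal.mk_le_mk_of_subset hcov
        _ ≤ #S * ⨆ s : S, #(Subtype.val '' {e : E | co (s : V) e ≠ 0}) :=
            Cardinal.mk_iUnion_le _
        _ ≤ #S * ℵ₀ := by
            refine mul_le_mul_right (ciSup_le' hcount) _
        _ = #S := Cardinal.mul_eq_left (Cardinal.aleph0_le_mk_iff.2 hSinf.to_subtype) (Cardinal.aleph0_le_mk_iff.2 hSinf.to_subtype)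
            Cardinal.aleph0_ne_zero
  exact le_antisymm (hES.trans_eq hScard) hbr_le


end Statement
end

section
/- Let I be a set with an ultrafilter U on I, and let 𝒱 be a family of Banach k-vector spaces indexed by I. Set V := ∏_{i∈I} 𝒱(i) (the bounded product) and V₀ := {v ∈ V : for every ε > 0, {i ∈ I : ‖v(i)‖ < ε} ∈ U}. Then (1) V₀ is a closed k-linear subspace of V, and (2) for every v ∈ V, the quotient norm of v + V₀ in V/V₀ is the unique real number r ≥ 0 such that for every ε > 0, {i ∈ I : |‖v(i)‖ − r| < ε} ∈ U. -/
open Cardinal Set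
open scoped ENNReal

universe u

section Statement

section Aux

variable {k : Type u} [NormedField k] [IsUltrametricDist k] {I : Type u} (U : Ultrafilter I)
  (𝒱 : I → Type u) [∀ i, NormedAddCommGroup (𝒱 i)] [∀ i, IsUltrametricDist (𝒱 i)]
  [∀ i, NormedSpace k (𝒱 i)]

theorem aux_isClosed :
    IsClosed {v : lp 𝒱 ∞ | ∀ ε : ℝ, 0 < ε → {i : I | ‖v i‖ < ε} ∈ U} := by
  rw [← closure_subset_iff_isClosed]
  intro v hv ε hε
  obtain ⟨w, hwS, hw⟩ := Metric.mem_closure_iff.mp hv ε hε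
  filter_upwards [hwS ε hε] with i hi
  have h1 : ‖(v - w : lp 𝒱 ∞) i‖ < ε := by
    refine lt_of_le_of_lt (lp.norm_apply_le_norm ENNReal.top_ne_zero _ i) ?_
    rwa [dist_eq_norm] at hw
  have h2 : v i = (v - w : lp 𝒱 ∞) i + w i := by
    rw [lp.coeFn_sub]; simp
  calc ‖v i‖ = ‖(v - w : lp 𝒱 ∞) i + w i‖ := by rw [← h2]
    _ ≤ max ‖(v - w : lp 𝒱 ∞) i‖ ‖w i‖ := IsUltrametricDist.norm_add_le_max _ _
    _ < ε := max_lt h1 hi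

theorem aux_norm (W : Submodule k (lp 𝒱 ∞))
    (hW : (W : Set (lp 𝒱 ∞)) = {v : lp 𝒱 ∞ | ∀ ε : ℝ, 0 < ε → {i : I | ‖v i‖ < ε} ∈ U})
    (v : lp 𝒱 ∞) :
    (∀ ε : ℝ, 0 < ε →
      {i : I | |‖v i‖ - ‖(Submodule.Quotient.mk v : lp 𝒱 ∞ ⧸ W)‖| < ε} ∈ U) ∧
    ∀ r : ℝ, 0 ≤ r → (∀ ε : ℝ, 0 < ε → {i : I | |‖v i‖ - r| < ε} ∈ U) →
      r = ‖(Submodule.Quotient.mk v : lp 𝒱 ∞ ⧸ W)‖ := by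
  classical
  have hWmem : ∀ x : lp 𝒱 ∞, x ∈ W ↔ ∀ ε : ℝ, 0 < ε → {i : I | ‖x i‖ < ε} ∈ U := by
    intro x
    constructor
    · intro hx; have : x ∈ (W : Set (lp 𝒱 ∞)) := hx; rwa [hW] at this
    · intro hx; have : x ∈ (W : Set (lp 𝒱 ∞)) := by rw [hW]; exact hx
      exact this
  have hbd : ∀ i, ‖v i‖ ∈ Set.Icc (0:ℝ) ‖v‖ :=
    fun i => ⟨norm_nonneg _, lp.norm_apply_le_norm ENNReal.top_ne_zero v i⟩
  obtain ⟨r, hrmem, hr⟩ :=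
    (isCompact_Icc (a := (0:ℝ)) (b := ‖v‖)).ultrafilter_le_nhds (U.map fun i => ‖v i‖)
      (by rw [Filter.le_principal_iff, Ultrafilter.coe_map, Filter.mem_map]
          exact Filter.mem_of_superset Filter.univ_mem (fun i _ => hbd i))
  have hrU : ∀ ε : ℝ, 0 < ε → {i : I | |‖v i‖ - r| < ε} ∈ U := by
    intro ε hε
    have := Metric.tendsto_nhds.mp hr ε hε
    exact (by simpa [Real.dist_eq] using this : ∀ᶠ x in (U : Filter I), |‖v x‖ - r| < ε)
  set q := ‖(Submodule.Quotient.mk v : lp 𝒱 ∞ ⧸ W)‖ with hq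
  have hq0 : 0 ≤ q := norm_nonneg _
  -- upper bound : q ≤ r
  have hub : q ≤ r := by
    refine le_of_forall_pos_le_add fun ε hε => ?_
    set g : ∀ i, 𝒱 i := fun i => if ‖v i‖ < r + ε then 0 else v i with hg
    have hgmem : Memℓp g ∞ := by
      apply memℓp_infty
      refine ⟨‖v‖, ?_⟩
      rintro x ⟨i, rfl⟩
      by_cases h : ‖v i‖ < r + ε <;> simp [hg, h, (hbd i).2, norm_nonneg]
    set w : lp 𝒱 ∞ := ⟨g, hgmem⟩ with hw
    have hwW : w ∈ W := by
      rw [hWmem]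
      intro δ hδ
      refine Filter.mem_of_superset (hrU ε hε) fun i hi => ?_
      have hlt : ‖v i‖ < r + ε := by
        have hi' : |‖v i‖ - r| < ε := hi
        have := abs_lt.mp hi'
        linarith [this.2]
      show ‖w i‖ < δ
      have : w i = 0 := by simp [hw, hg, hlt]
      rw [this]; simpa using hδ
    have hmk : (Submodule.Quotient.mk (v - w) : lp 𝒱 ∞ ⧸ W)
        = Submodule.Quotient.mk v := by
      rw [Submodule.Quotient.mk_sub, (Submodule.Quotient.mk_eq_zero W).mpr hwW, sub_zero]
    calc q = ‖(Submodule.Quotient.mk (v - w) : lp 𝒱 ∞ ⧸ W)‖ := by rw [hmk]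
      _ ≤ ‖v - w‖ := Submodule.Quotient.norm_mk_le _ _
      _ ≤ r + ε := by
          apply lp.norm_le_of_forall_le (by linarith [hrmem.1])
          intro i
          have hvw : (v - w : lp 𝒱 ∞) i = v i - g i := by rw [lp.coeFn_sub]; rfl
          rw [hvw]
          by_cases h : ‖v i‖ < r + ε
          · simp only [hg, if_pos h, sub_zero]; linarith
          · simp only [hg, if_neg h, sub_self, norm_zero]; linarith [hrmem.1]
  -- lower bound : r ≤ q
  have hlb : r ≤ q := by
    by_contra hcon
    push_neg at hcon
    set ε := (r - q) / 2 with hεdef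
    have hε : 0 < ε := by rw [hεdef]; linarith
    obtain ⟨m, hm, hmlt⟩ :=
      Submodule.Quotient.norm_mk_lt (Submodule.Quotient.mk v : lp 𝒱 ∞ ⧸ W) hε
    have hvmW : v - m ∈ W := by
      rw [← Submodule.Quotient.mk_eq_zero, Submodule.Quotient.mk_sub, hm, sub_self]
    rw [hWmem] at hvmW
    obtain ⟨i, hi1, hi2⟩ := Ultrafilter.nonempty_of_mem
      (Filter.inter_mem (hvmW ε hε) (hrU ε hε))
    have h2 : v i = (v - m : lp 𝒱 ∞) i + m i := by rw [lp.coeFn_sub]; simp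
    have hup : ‖v i‖ < q + ε := by
      calc ‖v i‖ = ‖(v - m : lp 𝒱 ∞) i + m i‖ := by rw [← h2]
        _ ≤ max ‖(v - m : lp 𝒱 ∞) i‖ ‖m i‖ := IsUltrametricDist.norm_add_le_max _ _
        _ < q + ε := by
            apply max_lt
            · have : ‖(v - m : lp 𝒱 ∞) i‖ < ε := hi1
              linarith
            · exact lt_of_le_of_lt (lp.norm_apply_le_norm ENNReal.top_ne_zero m i) hmlt
    have hdown : r - ε < ‖v i‖ := by
      have h3 : |‖v i‖ - r| < ε := hi2
      have := abs_lt.mp h3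
      linarith [this.1]
    have heq : q + ε = r - ε := by rw [hεdef]; ring
    linarith
  have hreq : r = q := le_antisymm hlb hub
  constructor
  · intro ε hε
    rw [← hreq]
    exact hrU ε hε
  · intro r' _ hr'
    rw [← hreq]
    by_contra hne
    have hd : 0 < |r' - r| / 2 := by
      have : r' - r ≠ 0 := sub_ne_zero.mpr hne
      positivity
    obtain ⟨i, hi1, hi2⟩ := Ultrafilter.nonempty_of_mem
      (Filter.inter_mem (hr' (|r' - r| / 2) hd) (hrU (|r' - r| / 2) hd))
    have habs : |r' - r| < |r' - r| := by
      calc |r' - r| = |(r' - ‖v i‖) + (‖v i‖ - r)| := by congr 1; ring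
        _ ≤ |r' - ‖v i‖| + |‖v i‖ - r| := abs_add_le _ _
        _ < |r' - r| / 2 + |r' - r| / 2 := by
            have h1 : |‖v i‖ - r'| < |r' - r| / 2 := hi1
            have h2 : |‖v i‖ - r| < |r' - r| / 2 := hi2
            rw [abs_sub_comm r' (‖v i‖)]
            exact add_lt_add h1 h2
        _ = |r' - r| := by ring
    exact absurd habs (lt_irrefl _)

end Aux

variable (k : Type u) [NormedField k] [IsUltrametricDist k] [CompleteSpace k]

/-- Ultrapower construction: for an ultrafilter `U` on `I` and a family `𝒱` of Banach
`k`-vector spaces, the set `V₀` of elements of the bounded product infinitesimal along `U`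
is a closed subspace, and the quotient norm of `v + V₀` is the unique `r ≥ 0` such that
for every `ε > 0` the set `{i | |‖v i‖ - r| < ε}` belongs to `U`. -/
theorem ultrapower_quotient_norm (I : Type u) (U : Ultrafilter I) (𝒱 : I → Type u)
    [∀ i, NormedAddCommGroup (𝒱 i)] [∀ i, IsUltrametricDist (𝒱 i)]
    [∀ i, NormedSpace k (𝒱 i)] [∀ i, CompleteSpace (𝒱 i)] :
    ∃ W : Submodule k (lp 𝒱 ∞),
      (W : Set (lp 𝒱 ∞)) = {v : lp 𝒱 ∞ | ∀ ε : ℝ, 0 < ε → {i : I | ‖v i‖ < ε} ∈ U} ∧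
      IsClosed (W : Set (lp 𝒱 ∞)) ∧
      ∀ v : lp 𝒱 ∞,
        (∀ ε : ℝ, 0 < ε →
          {i : I | |‖v i‖ - ‖(Submodule.Quotient.mk v : lp 𝒱 ∞ ⧸ W)‖| < ε} ∈ U) ∧
        ∀ r : ℝ, 0 ≤ r → (∀ ε : ℝ, 0 < ε → {i : I | |‖v i‖ - r| < ε} ∈ U) →
          r = ‖(Submodule.Quotient.mk v : lp 𝒱 ∞ ⧸ W)‖ := by
  classical
  refine ⟨{ carrier := {v : lp 𝒱 ∞ | ∀ ε : ℝ, 0 < ε → {i : I | ‖v i‖ < ε} ∈ U}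
            add_mem' := ?_
            zero_mem' := ?_
            smul_mem' := ?_ }, rfl, aux_isClosed U 𝒱, fun v => aux_norm U 𝒱 _ rfl v⟩
  · intro a b ha hb ε hε
    filter_upwards [ha ε hε, hb ε hε] with i hia hib
    show ‖(a + b : lp 𝒱 ∞) i‖ < ε
    calc ‖(a + b : lp 𝒱 ∞) i‖ = ‖a i + b i‖ := by rw [lp.coeFn_add]; rfl
      _ ≤ max ‖a i‖ ‖b i‖ := IsUltrametricDist.norm_add_le_max _ _
      _ < ε := max_lt hia hib
  · intro ε hε
    have : {i : I | ‖(0 : lp 𝒱 ∞) i‖ < ε} = Set.univ := by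
      ext i; simp [lp.coeFn_zero, hε]
    rw [this]; exact Filter.univ_mem
  · intro c a ha ε hε
    have hc1 : (0:ℝ) < ‖c‖ + 1 := by positivity
    filter_upwards [ha (ε / (‖c‖ + 1)) (by positivity)] with i hia
    show ‖(c • a : lp 𝒱 ∞) i‖ < ε
    have hsm : ‖(c • a : lp 𝒱 ∞) i‖ = ‖c‖ * ‖a i‖ := by
      rw [lp.coeFn_smul]; exact norm_smul c (a i)
    rw [hsm]
    calc ‖c‖ * ‖a i‖ ≤ (‖c‖ + 1) * ‖a i‖ :=
          mul_le_mul_of_nonneg_right (by linarith) (norm_nonneg _)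
      _ < (‖c‖ + 1) * (ε / (‖c‖ + 1)) := mul_lt_mul_of_pos_left hia hc1
      _ = ε := by field_simp


end Statement
end

section
/- Let I be a set with an ℵ₁-complete ultrafilter U on I, and let 𝒱 be a family of Banach k-vector spaces indexed by I. Set V := ∏_{i∈I} 𝒱(i) (the bounded product) and V₀ := {v ∈ V : {i ∈ I : v(i) = 0} ∈ U}. Then (1) V₀ is a closed k-linear subspace of V, and (2) for every v ∈ V, the quotient norm of v + V₀ in V/V₀ is the unique real number r ≥ 0 such that {i ∈ I : ‖v(i)‖ = r} ∈ U. -/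
open Cardinal Set
open scoped ENNReal

universe u

section Statement

variable (k : Type u) [NormedField k] [IsUltrametricDist k] [CompleteSpace k]

/-- An `ℵ₁`-complete ultrafilter has a genuine limit value for any bounded real family. -/
theorem exists_ultralim {I : Type u} (U : Ultrafilter I)
    (hU : IsLambdaCompleteFilter (Cardinal.aleph 1) (↑U : Filter I))
    (f : I → ℝ) (M : ℝ) (hM : ∀ i, |f i| ≤ M) :
    ∃ r : ℝ, {i : I | f i = r} ∈ U := by
  have hmem : Set.Icc (-M) M ∈ Ultrafilter.map f U := by
    refine Filter.mem_map.mpr (Filter.univ_mem' fun i => ?_)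
    exact abs_le.mp (hM i)
  obtain ⟨r, -, hle⟩ := (isCompact_Icc (a := -M) (b := M)).ultrafilter_le_nhds
    (Ultrafilter.map f U) (by rwa [Filter.le_principal_iff])
  set A : ℕ → Set I := fun n => {i : I | |f i - r| < 1 / (n + 1)} with hA
  have hAU : ∀ n, A n ∈ U := by
    intro n
    have hball : Metric.ball r (1 / (n + 1)) ∈ Ultrafilter.map f U :=
      hle (Metric.ball_mem_nhds r (by positivity))
    have : f ⁻¹' Metric.ball r (1 / (n + 1)) ∈ U := Filter.mem_map.mp hball
    refine Filter.mem_of_superset this ?_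
    intro i hi
    simpa [A, Real.dist_eq] using hi
  have hS : ⋂₀ Set.range A ∈ U := by
    refine hU (Set.range A) ?_ ?_
    · refine lt_of_le_of_lt ?_ Cardinal.aleph0_lt_aleph_one
      exact Cardinal.mk_le_aleph0_iff.mpr (Set.countable_range A).to_subtype
    · rintro B ⟨n, rfl⟩; exact hAU n
  refine ⟨r, Filter.mem_of_superset hS ?_⟩
  intro i hi
  rw [Set.sInter_range] at hi
  simp only [Set.mem_iInter] at hi
  by_contra hne
  have habs : 0 < |f i - r| := abs_pos.mpr (sub_ne_zero.mpr hne)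
  obtain ⟨n, hn⟩ := exists_nat_one_div_lt habs
  exact absurd (hi n) (by simp only [A, Set.mem_setOf_eq, not_lt]; exact le_of_lt hn)

/-- For an `ℵ₁`-complete ultrafilter `U` on `I` and a family `𝒱` of Banach `k`-vector
spaces, the set of elements of the bounded product vanishing `U`-almost everywhere is a
closed subspace, and the quotient norm of `v + V₀` is the unique `r ≥ 0` such that
`{i | ‖v i‖ = r} ∈ U`. -/

theorem ultraproduct_quotient_norm (I : Type u) (U : Ultrafilter I)
    (hU : IsLambdaCompleteFilter (Cardinal.aleph 1) (↑U : Filter I))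
    (𝒱 : I → Type u)
    [∀ i, NormedAddCommGroup (𝒱 i)] [∀ i, IsUltrametricDist (𝒱 i)]
    [∀ i, NormedSpace k (𝒱 i)] [∀ i, CompleteSpace (𝒱 i)] :
    ∃ W : Submodule k (lp 𝒱 ∞),
      (W : Set (lp 𝒱 ∞)) = {v : lp 𝒱 ∞ | {i : I | v i = 0} ∈ U} ∧
      IsClosed (W : Set (lp 𝒱 ∞)) ∧
      ∀ v : lp 𝒱 ∞,
        {i : I | ‖v i‖ = ‖(Submodule.Quotient.mk v : lp 𝒱 ∞ ⧸ W)‖} ∈ U ∧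
        ∀ r : ℝ, 0 ≤ r → {i : I | ‖v i‖ = r} ∈ U →
          r = ‖(Submodule.Quotient.mk v : lp 𝒱 ∞ ⧸ W)‖ := by
  classical
  haveI : Nonempty I := Filter.nonempty_of_neBot (↑U : Filter I)
  set W : Submodule k (lp 𝒱 ∞) :=
    { carrier := {v : lp 𝒱 ∞ | {i : I | v i = 0} ∈ U}
      zero_mem' := by
        simp only [Set.mem_setOf_eq, lp.coeFn_zero, Pi.zero_apply]
        exact Filter.univ_mem' fun i => trivial
      add_mem' := by
        intro a b ha hb
        refine Filter.mem_of_superset (Filter.inter_mem ha hb) ?_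
        rintro i ⟨hia, hib⟩
        simp only [Set.mem_setOf_eq] at hia hib ⊢
        simp [lp.coeFn_add, hia, hib]
      smul_mem' := by
        intro c v hv
        refine Filter.mem_of_superset hv ?_
        intro i hi
        simp only [Set.mem_setOf_eq] at hi ⊢
        simp [lp.coeFn_smul, hi] } with hWdef
  -- the limit value of the norms
  have key : ∀ v : lp 𝒱 ∞, ∃ r : ℝ, 0 ≤ r ∧ {i : I | ‖v i‖ = r} ∈ U := by
    intro v
    obtain ⟨r, hr⟩ := exists_ultralim U hU (fun i => ‖v i‖) ‖v‖
      (fun i => by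
        rw [abs_of_nonneg (norm_nonneg _)]
        exact lp.norm_apply_le_norm ENNReal.top_ne_zero v i)
    obtain ⟨i, hi⟩ := Ultrafilter.nonempty_of_mem hr
    exact ⟨r, hi ▸ norm_nonneg _, hr⟩
  -- the quotient norm is the limit value
  have quot : ∀ (v : lp 𝒱 ∞) (r : ℝ), {i : I | ‖v i‖ = r} ∈ U →
      ‖(Submodule.Quotient.mk v : lp 𝒱 ∞ ⧸ W)‖ = r := by
    intro v r hr
    refine le_antisymm ?_ ?_
    · -- truncate v off the limit set
      set g : ∀ i, 𝒱 i := fun i => if ‖v i‖ = r then 0 else -(v i) with hg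
      have hgmem : Memℓp g ∞ := by
        refine memℓp_infty ⟨‖v‖, ?_⟩
        rintro x ⟨i, rfl⟩
        by_cases h : ‖v i‖ = r
        · simp only [g, if_pos h, norm_zero]
          exact norm_nonneg _
        · simp only [g, if_neg h, norm_neg]
          exact lp.norm_apply_le_norm ENNReal.top_ne_zero v i
      set w : lp 𝒱 ∞ := ⟨g, hgmem⟩ with hw
      have hwW : w ∈ W := by
        refine Filter.mem_of_superset hr ?_
        intro i hi
        simp only [Set.mem_setOf_eq] at hi ⊢
        show g i = 0
        simp [g, hi]
      have hmk : (Submodule.Quotient.mk v : lp 𝒱 ∞ ⧸ W) = Submodule.Quotient.mk (v + w) := by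
        rw [Submodule.Quotient.eq]
        simpa using W.neg_mem hwW
      have hnorm : ‖v + w‖ ≤ r := by
        rw [lp.norm_eq_ciSup]
        refine ciSup_le fun i => ?_
        have : (v + w) i = v i + g i := rfl
        rw [this]
        by_cases h : ‖v i‖ = r
        · simp [g, h]
        · simp only [g, if_neg h, add_neg_cancel, norm_zero]
          obtain ⟨j, hj⟩ := Ultrafilter.nonempty_of_mem hr
          exact hj ▸ norm_nonneg _
      calc ‖(Submodule.Quotient.mk v : lp 𝒱 ∞ ⧸ W)‖
          = ‖(Submodule.Quotient.mk (v + w) : lp 𝒱 ∞ ⧸ W)‖ := by rw [hmk]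
        _ ≤ ‖v + w‖ := Submodule.Quotient.norm_mk_le _ _
        _ ≤ r := hnorm
    · by_contra hlt
      push_neg at hlt
      obtain ⟨m, hm, hmlt⟩ := Submodule.Quotient.norm_mk_lt
        (Submodule.Quotient.mk v : lp 𝒱 ∞ ⧸ W) (sub_pos.mpr hlt)
      have hmem : m - v ∈ W := by
        rw [← Submodule.Quotient.eq]; exact hm.trans rfl
      obtain ⟨i, hi1, hi2⟩ := Ultrafilter.nonempty_of_mem (Filter.inter_mem hr hmem)
      have hmi : m i = v i := by
        have h2 : m i - v i = 0 := hi2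
        exact sub_eq_zero.mp h2
      have : r ≤ ‖m‖ := by
        rw [← hi1, ← hmi]
        exact lp.norm_apply_le_norm ENNReal.top_ne_zero m i
      linarith
  refine ⟨W, rfl, ?_, ?_⟩
  · rw [← isOpen_compl_iff]
    rw [Metric.isOpen_iff]
    intro v hv
    have hvne : {i : I | v i ≠ 0} ∈ U := Ultrafilter.compl_mem_iff_notMem.mpr hv
    obtain ⟨r, hr0, hr⟩ := key v
    have hrpos : 0 < r := by
      obtain ⟨i, hi1, hi2⟩ := Ultrafilter.nonempty_of_mem (Filter.inter_mem hr hvne)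
      rw [← hi1]
      exact norm_pos_iff.mpr hi2
    refine ⟨r, hrpos, ?_⟩
    intro u hu hmemu
    have humem : {i : I | u i = 0} ∈ U := hmemu
    obtain ⟨i, hi1, hi2⟩ := Ultrafilter.nonempty_of_mem (Filter.inter_mem hr humem)
    have hlt : ‖v i - u i‖ < r := by
      have h1 : ‖(v - u) i‖ ≤ ‖v - u‖ := lp.norm_apply_le_norm ENNReal.top_ne_zero (v - u) i
      have h2 : (v - u) i = v i - u i := rfl
      rw [h2] at h1
      refine lt_of_le_of_lt h1 ?_
      rw [← dist_eq_norm, dist_comm]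
      exact hu
    rw [hi2, sub_zero] at hlt
    exact absurd hi1 (by rw [Set.mem_setOf_eq] at hi1 ⊢; linarith)
  · intro v
    obtain ⟨r, hr0, hr⟩ := key v
    have hq := quot v r hr
    constructor
    · rw [hq]; exact hr
    · intro r' hr'0 hr'
      obtain ⟨i, hi1, hi2⟩ := Ultrafilter.nonempty_of_mem (Filter.inter_mem hr hr')
      rw [hq, ← hi1, ← hi2]


end Statement
end

section
/- Suppose the valuation of k is trivial, i.e. |c| = 1 for every c ∈ k with c ≠ 0. Then for any Banach k-vector space V, the following are equivalent: (1) V is free; (2) V is almost free, and V is isomorphic to k if dim_k V = 1; (3) ‖V‖ ⊆ |k|, i.e. every v ∈ V has ‖v‖ ∈ {0, 1}. -/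
open Cardinal Set
open scoped ENNReal

universe u

section Aux

variable {k : Type u} [NormedField k]

lemma aux_sup_zero {E : Type u} (c : E → k) (h : ∀ e, c e = 0) :
    (⨆ e : E, ‖c e‖) = 0 := by
  rcases isEmpty_or_nonempty E with hE | hE
  · exact Real.iSup_of_isEmpty _
  · simp [h]

lemma aux_sup_one (htriv : ∀ c : k, c ≠ 0 → ‖c‖ = 1) {E : Type u} (c : E → k)
    (e₀ : E) (h : c e₀ ≠ 0) : (⨆ e : E, ‖c e‖) = 1 := by
  have hub : ∀ e, ‖c e‖ ≤ 1 := by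
    intro e
    by_cases he : c e = 0
    · simp [he]
    · exact (htriv _ he).le
  have : Nonempty E := ⟨e₀⟩
  refine le_antisymm (ciSup_le hub) ?_
  calc (1 : ℝ) = ‖c e₀‖ := (htriv _ h).symm
    _ ≤ ⨆ e : E, ‖c e‖ :=
      le_ciSup (f := fun e : E => ‖c e‖) ⟨1, by rintro x ⟨e, rfl⟩; exact hub e⟩ e₀

/-- Any normed space over a trivially valued field whose norms lie in `{0, 1}` is free:
any Hamel basis is an orthonormal Schauder basis. -/
lemma aux_free_of_norm01 (V : Type u) [NormedAddCommGroup V] [NormedSpace k V]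
    (htriv : ∀ c : k, c ≠ 0 → ‖c‖ = 1)
    (hV : ∀ v : V, v ≠ 0 → ‖v‖ = 1) : IsFreeBanach k V := by
  classical
  set b := Module.Basis.ofVectorSpace k V with hb
  have hbv : ∀ e : Module.Basis.ofVectorSpaceIndex k V, b e = (e : V) := fun e =>
    Module.Basis.ofVectorSpace_apply_self k V e
  refine ⟨Module.Basis.ofVectorSpaceIndex k V, ?_, ?_, ?_⟩
  · intro e he
    refine hV e ?_
    have := b.ne_zero (⟨e, he⟩ : Module.Basis.ofVectorSpaceIndex k V)
    rwa [hbv] at this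
  · intro c hc
    have hfin : {e : Module.Basis.ofVectorSpaceIndex k V | c e ≠ 0}.Finite := by
      refine (hc 1 one_pos).subset ?_
      intro e he
      simp only [Set.mem_setOf_eq] at he ⊢
      rw [htriv _ he]
    set t := hfin.toFinset with ht
    have hsum : HasSum (fun e : Module.Basis.ofVectorSpaceIndex k V => c e • (e : V))
        (∑ e ∈ t, c e • (e : V)) := by
      refine hasSum_sum_of_ne_finset_zero ?_
      intro e he
      have hce : c e = 0 := by
        by_contra hne
        exact he (by simpa [ht] using hne)
      simp [hce]
    refine ⟨_, hsum, ?_⟩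
    by_cases hzero : ∀ e, c e = 0
    · rw [aux_sup_zero c hzero]
      have : (∑ e ∈ t, c e • (e : V)) = 0 := by
        refine Finset.sum_eq_zero ?_
        intro e _
        simp [hzero e]
      simp [this]
    · push_neg at hzero
      obtain ⟨e₀, he₀⟩ := hzero
      rw [aux_sup_one htriv c e₀ he₀]
      refine hV _ ?_
      intro h0
      have hli := b.linearIndependent
      rw [show ⇑b = fun e : Module.Basis.ofVectorSpaceIndex k V => (e : V) from
        funext hbv] at hli
      have := linearIndependent_iff'.mp hli t c h0 e₀ ?_
      · exact he₀ this
      · simp [ht, he₀]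
  · intro v
    refine ⟨fun e => b.repr v e, ?_, ?_⟩
    · intro ε hε
      refine ((b.repr v).support.finite_toSet).subset ?_
      intro e he
      simp only [Set.mem_setOf_eq] at he
      simp only [Finset.coe_sort_coe, Finset.mem_coe, Finsupp.mem_support_iff]
      intro h0
      rw [h0] at he
      simp at he
      exact absurd (lt_of_lt_of_le hε he) (lt_irrefl 0)
    · have key : (∑ e ∈ (b.repr v).support, b.repr v e • (e : V)) = v := by
        conv_rhs => rw [← b.linearCombination_repr v]
        simp only [Finsupp.linearCombination_apply, Finsupp.sum]
        exact Finset.sum_congr rfl fun e _ => by rw [hbv]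
      have hs := hasSum_sum_of_ne_finset_zero
        (f := fun e : Module.Basis.ofVectorSpaceIndex k V => b.repr v e • (e : V))
        (s := (b.repr v).support)
        (L := SummationFilter.unconditional _)
        (fun e he => by simp [Finsupp.notMem_support_iff.mp he])
      rwa [key] at hs

/-- Conversely, a free space over a trivially valued field has norms in `{0, 1}`. -/
lemma aux_norm01_of_free (V : Type u) [NormedAddCommGroup V] [NormedSpace k V]
    (htriv : ∀ c : k, c ≠ 0 → ‖c‖ = 1)
    (hfree : IsFreeBanach k V) : ∀ v : V, ‖v‖ = 0 ∨ ‖v‖ = 1 := by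
  obtain ⟨E, h1, h2, h3⟩ := hfree
  intro v
  obtain ⟨c, hc0, hcsum⟩ := h3 v
  obtain ⟨s, hs, hnorm⟩ := h2 c hc0
  have hsv : s = v := hs.unique hcsum
  rw [hsv] at hnorm
  by_cases hzero : ∀ e, c e = 0
  · left; rw [hnorm]; exact aux_sup_zero c hzero
  · right
    push_neg at hzero
    obtain ⟨e₀, he₀⟩ := hzero
    rw [hnorm]
    exact aux_sup_one htriv c e₀ he₀

end Aux

section Statement

variable (k : Type u) [NormedField k] [IsUltrametricDist k] [CompleteSpace k]
variable (V : Type u) [NormedAddCommGroup V] [IsUltrametricDist V]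
  [NormedSpace k V] [CompleteSpace V]

/-- If the valuation of `k` is trivial, then for a Banach `k`-vector space `V` the
following are equivalent: (1) `V` is free; (2) `V` is almost free and is isometrically
isomorphic to `k` if it is one-dimensional; (3) `‖V‖ ⊆ |k|`. -/
theorem free_iff_of_trivial_valuation (htriv : ∀ c : k, c ≠ 0 → ‖c‖ = 1) :
    (IsFreeBanach k V ↔
      (IsAlmostFree k V ∧ (Module.rank k V = 1 → Nonempty (V ≃ₗᵢ[k] k)))) ∧
    (IsFreeBanach k V ↔ ∀ v : V, ∃ c : k, ‖v‖ = ‖c‖) := by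
  classical
  have hA : (∀ v : V, ‖v‖ = 0 ∨ ‖v‖ = 1) → IsFreeBanach k V := fun hv =>
    aux_free_of_norm01 V htriv fun v h0 =>
      (hv v).resolve_left fun h => h0 (norm_eq_zero.mp h)
  have hB : IsFreeBanach k V → ∀ v : V, ‖v‖ = 0 ∨ ‖v‖ = 1 :=
    aux_norm01_of_free V htriv
  have hsubfree : (∀ v : V, ‖v‖ = 0 ∨ ‖v‖ = 1) → ∀ W : Submodule k V, IsFreeSub k W := by
    intro hv W
    refine aux_free_of_norm01 (↥W) htriv ?_
    intro w hw
    have hw' : (w : V) ≠ 0 := fun h => hw (Subtype.ext h)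
    exact (hv w).resolve_left fun h => hw' (norm_eq_zero.mp h)
  have hiso : (∀ v : V, ‖v‖ = 0 ∨ ‖v‖ = 1) →
      Module.rank k V = 1 → Nonempty (V ≃ₗᵢ[k] k) := by
    intro hv hrank
    obtain ⟨v₀, hv₀, hspan⟩ := rank_eq_one_iff.mp hrank
    have hv₀1 : ‖v₀‖ = 1 := (hv v₀).resolve_left fun h => hv₀ (norm_eq_zero.mp h)
    have hbij : Function.Bijective (LinearMap.toSpanSingleton k V v₀) := by
      constructor
      · intro a b hab
        have hab' : a • v₀ = b • v₀ := by
          simpa [LinearMap.toSpanSingleton_apply] using hab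
        have h1 : (a - b) • v₀ = 0 := by
          rw [sub_smul, sub_eq_zero]
          exact hab'
        exact sub_eq_zero.mp ((smul_eq_zero.mp h1).resolve_right hv₀)
      · intro w
        obtain ⟨r, hr⟩ := hspan w
        exact ⟨r, by simpa [LinearMap.toSpanSingleton_apply] using hr⟩
    let e : k ≃ₗ[k] V := LinearEquiv.ofBijective _ hbij
    have he : ∀ c : k, e c = c • v₀ := fun c => rfl
    refine ⟨(LinearIsometryEquiv.mk e fun c => ?_).symm⟩
    rw [he, norm_smul, hv₀1, mul_one]
  have h21 : IsAlmostFree k V → (Module.rank k V = 1 → Nonempty (V ≃ₗᵢ[k] k)) →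
      ∀ v : V, ‖v‖ = 0 ∨ ‖v‖ = 1 := by
    intro haf hdim v
    by_cases hv0 : v = 0
    · left; simp [hv0]
    rcases lt_or_ge 1 (bRank k V) with hlt | hle
    · have hcard : #({v} : Set V) < bRank k V := by
        rw [Cardinal.mk_singleton]; exact hlt
      have hfree := haf {v} hcard
      have hmem : v ∈ closedSpan k {v} :=
        (Submodule.le_topologicalClosure _) (Submodule.mem_span_singleton_self v)
      exact aux_norm01_of_free (↥(closedSpan k ({v} : Set V))) htriv hfree ⟨v, hmem⟩
    · have hne : {c : Cardinal.{u} |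
          ∃ S : Set V, #S = c ∧ closedSpan k S = ⊤}.Nonempty := by
        refine ⟨#(Set.univ : Set V), Set.univ, rfl, ?_⟩
        rw [closedSpan, Submodule.span_univ]
        exact le_antisymm le_top (Submodule.le_topologicalClosure _)
      obtain ⟨S, hScard, hSspan⟩ := csInf_mem hne
      have hS1 : S.Subsingleton := by
        rw [← Cardinal.mk_le_one_iff_set_subsingleton, hScard]
        exact hle
      have hvmem : v ∈ closedSpan k S := by rw [hSspan]; exact Submodule.mem_top
      rcases hS1.eq_empty_or_singleton with hSe | ⟨v₀, hSv⟩
      · exfalso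
        subst hSe
        have hcoe : (closedSpan k (∅ : Set V) : Set V) = closure ({0} : Set V) := by
          rw [closedSpan, Submodule.span_empty, Submodule.topologicalClosure_coe,
            Submodule.bot_coe]
        have hcl : v ∈ closure ({0} : Set V) := by rw [← hcoe]; exact hvmem
        rw [isClosed_singleton.closure_eq] at hcl
        exact hv0 hcl
      · subst hSv
        by_cases h0 : v₀ = 0
        · exfalso
          subst h0
          have hcoe : (closedSpan k ({(0 : V)} : Set V) : Set V)
              = closure ({0} : Set V) := by
            rw [closedSpan, Submodule.span_zero_singleton,
              Submodule.topologicalClosure_coe, Submodule.bot_coe]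
          have hcl : v ∈ closure ({0} : Set V) := by rw [← hcoe]; exact hvmem
          rw [isClosed_singleton.closure_eq] at hcl
          exact hv0 hcl
        · have hv₀pos : (0 : ℝ) < ‖v₀‖ := norm_pos_iff.mpr h0
          have hdisc : ∀ a ∈ Submodule.span k ({v₀} : Set V),
              ∀ b ∈ Submodule.span k ({v₀} : Set V), dist a b < ‖v₀‖ → a = b := by
            intro a ha b hb hab
            obtain ⟨ca, rfl⟩ := Submodule.mem_span_singleton.mp ha
            obtain ⟨cb, rfl⟩ := Submodule.mem_span_singleton.mp hb
            by_contra hne'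
            have hc : ca - cb ≠ 0 := by
              intro h; exact hne' (by rw [sub_eq_zero.mp h])
            have hd : dist (ca • v₀) (cb • v₀) = ‖v₀‖ := by
              rw [dist_eq_norm, ← sub_smul, norm_smul, htriv _ hc, one_mul]
            rw [hd] at hab
            exact lt_irrefl _ hab
          have hclosed : IsClosed ((Submodule.span k ({v₀} : Set V) : Set V)) := by
            refine isClosed_of_closure_subset ?_
            intro x hx
            obtain ⟨y, hy, hxy⟩ :=
              Metric.mem_closure_iff.mp hx (‖v₀‖ / 2) (by positivity)
            have hxyall : ∀ ε : ℝ, 0 < ε → dist x y < ε := by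
              intro ε hε
              obtain ⟨y', hy', hxy'⟩ :=
                Metric.mem_closure_iff.mp hx (min ε (‖v₀‖ / 2)) (by positivity)
              have hyy' : y = y' := by
                refine hdisc y hy y' hy' ?_
                calc dist y y' ≤ dist y x + dist x y' := dist_triangle _ _ _
                  _ < ‖v₀‖ / 2 + ‖v₀‖ / 2 := by
                      refine add_lt_add ?_ (hxy'.trans_le (min_le_right _ _))
                      rw [dist_comm]; exact hxy
                  _ = ‖v₀‖ := by ring
              rw [hyy']
              exact hxy'.trans_le (min_le_left _ _)
            have hd0 : dist x y ≤ 0 := by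
              by_contra hd
              push_neg at hd
              exact lt_irrefl _ (hxyall _ hd)
            have hxy0 : x = y := eq_of_dist_eq_zero (le_antisymm hd0 dist_nonneg)
            rw [hxy0]; exact hy
          have hspaneq : Submodule.span k ({v₀} : Set V) = ⊤ := by
            rw [← hSspan, closedSpan, IsClosed.submodule_topologicalClosure_eq hclosed]
          have hrank : Module.rank k V = 1 := by
            refine rank_eq_one v₀ h0 ?_
            intro w
            have hw : w ∈ Submodule.span k ({v₀} : Set V) := by
              rw [hspaneq]; exact Submodule.mem_top
            exact Submodule.mem_span_singleton.mp hw
          obtain ⟨φ⟩ := hdim hrank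
          right
          rw [← φ.norm_map v]
          exact htriv _ fun h => hv0 (φ.map_eq_zero_iff.mp h)
  refine ⟨⟨fun hfree => ⟨fun S _ => hsubfree (hB hfree) (closedSpan k S),
      hiso (hB hfree)⟩, fun h => hA (h21 h.1 h.2)⟩,
    ⟨fun hfree v => ?_, fun h3 => hA fun v => ?_⟩⟩
  · rcases hB hfree v with h | h
    · exact ⟨0, by simp [h]⟩
    · exact ⟨1, by simp [h]⟩
  · obtain ⟨c, hc⟩ := h3 v
    by_cases hc0 : c = 0
    · left; rw [hc, hc0, norm_zero]
    · right; rw [hc, htriv _ hc0]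


end Statement
end

section
/- Suppose k is a local field, i.e. the value group |k^×| is an infinite cyclic (rank-1 free) subgroup of the multiplicative group ℝ_{>0} and the residue field of the valuation ring O_k = {c ∈ k : |c| ≤ 1} is finite. Then for any Banach k-vector space V, the following are equivalent: (1) V is free; (2) V is almost free, and V is isomorphic to k if dim_k V = 1; (3) ‖V‖ ⊆ |k|, i.e. every v ∈ V has ‖v‖ ∈ |k|. -/
open Cardinal Set
open scoped ENNReal

universe u

section Aux

open Metric Filter Topology
open scoped NNReal

variable {k : Type u} [NormedField k]
variable {V : Type u} [NormedAddCommGroup V] [IsUltrametricDist V] [NormedSpace k V]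

instance submodule_isUltrametricDist (W : Submodule k V) : IsUltrametricDist W :=
  ⟨fun x y z => by
    simpa only [Subtype.dist_eq] using IsUltrametricDist.dist_triangle_max (x : V) (y : V) (z : V)⟩

/-- Orthonormality of a subset of a normed space. -/
def Orth (k : Type u) [NormedField k] {V : Type u} [NormedAddCommGroup V] [NormedSpace k V]
    (E : Set V) : Prop :=
  (∀ e ∈ E, ‖e‖ = 1) ∧
  ∀ s : Finset V, ↑s ⊆ E → ∀ c : V → k, ‖∑ v ∈ s, c v • v‖₊ = s.sup fun v => ‖c v‖₊

lemma Orth.sum_attach {E : Set V} (hE : Orth k E) (t : Finset E) (c : E → k) :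
    ‖∑ e ∈ t, c e • (e : V)‖₊ = t.sup fun e => ‖c e‖₊ := by
  classical
  set s : Finset V := t.image Subtype.val with hs
  set cV : V → k := fun v => if h : v ∈ E then c ⟨v, h⟩ else 0 with hcV
  have hsub : ↑s ⊆ E := by
    intro v hv
    rcases Finset.mem_image.1 (Finset.mem_coe.1 hv) with ⟨e, _, rfl⟩
    exact e.2
  have hsum : ∑ v ∈ s, cV v • v = ∑ e ∈ t, c e • (e : V) := by
    rw [hs, Finset.sum_image (fun a _ b _ h => Subtype.val_injective h)]
    exact Finset.sum_congr rfl fun e _ => by simp [hcV, e.2]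
  have hsup : (s.sup fun v => ‖cV v‖₊) = t.sup fun e => ‖c e‖₊ := by
    rw [hs, Finset.sup_image]
    exact Finset.sup_congr rfl fun e _ => by simp [hcV, e.2]
  rw [← hsum, hE.2 s hsub cV, hsup]

lemma exists_max_of_c0 {E : Type u} {c : E → k} (hc : IsC0Family k c) (e₁ : E)
    (h₁ : c e₁ ≠ 0) : ∃ e₀, ∀ e, ‖c e‖ ≤ ‖c e₀‖ := by
  have hε : (0 : ℝ) < ‖c e₁‖ := norm_pos_iff.2 h₁
  have hfin : {e : E | ‖c e₁‖ ≤ ‖c e‖}.Finite := hc _ hε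
  have hne : {e : E | ‖c e₁‖ ≤ ‖c e‖}.Nonempty := ⟨e₁, show ‖c e₁‖ ≤ ‖c e₁‖ from le_rfl⟩
  obtain ⟨e₀, he₀, hmax⟩ := Set.exists_max_image _ (fun e => ‖c e‖) hfin hne
  refine ⟨e₀, fun e => ?_⟩
  by_cases he : ‖c e₁‖ ≤ ‖c e‖
  · exact hmax e he
  · exact le_trans (le_of_not_ge he) (hmax e₁ (show ‖c e₁‖ ≤ ‖c e₁‖ from le_rfl))

lemma ciSup_eq_of_max {E : Type u} [Nonempty E] {f : E → ℝ} {e₀ : E} (h : ∀ e, f e ≤ f e₀) :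
    (⨆ e, f e) = f e₀ :=
  le_antisymm (ciSup_le h) (le_ciSup ⟨f e₀, by rintro x ⟨e, rfl⟩; exact h e⟩ e₀)

lemma c0_sup_zero {E : Type u} {c : E → k} (h : ∀ e, c e = 0) :
    (⨆ e : E, ‖c e‖) = 0 := by
  rcases isEmpty_or_nonempty E with hE | hE
  · exact Real.iSup_of_isEmpty _
  · have h0 : ∀ e : E, ‖c e‖ = 0 := fun e => by rw [h e, norm_zero]
    rw [show (⨆ e : E, ‖c e‖) = ⨆ _ : E, (0 : ℝ) from by simp only [h0], ciSup_const]

lemma Orth.hasSum_of_c0 [CompleteSpace V] {E : Set V} (hE : Orth k E)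
    (c : E → k) (hc : IsC0Family k c) :
    ∃ s : V, HasSum (fun e : E => c e • (e : V)) s ∧ ‖s‖ = ⨆ e : E, ‖c e‖ := by
  classical
  have hnorm1 : ∀ e : E, ‖c e • (e : V)‖ = ‖c e‖ := fun e => by
    rw [norm_smul, hE.1 e e.2, mul_one]
  have htend : Tendsto (fun e : E => c e • (e : V)) cofinite (𝓝 0) := by
    rw [NormedAddCommGroup.tendsto_nhds_zero]
    intro ε hε
    rw [Filter.eventually_cofinite]
    refine (hc ε hε).subset ?_
    intro e he
    simp only [Set.mem_setOf_eq, not_lt] at he ⊢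
    rwa [hnorm1] at he
  have hsummable : Summable fun e : E => c e • (e : V) :=
    NonarchimedeanAddGroup.summable_of_tendsto_cofinite_zero htend
  obtain ⟨s, hsum⟩ := hsummable
  refine ⟨s, hsum, ?_⟩
  have h1 : Tendsto (fun t : Finset E => ∑ e ∈ t, c e • (e : V)) atTop (𝓝 s) := hsum
  by_cases hzero : ∀ e : E, c e = 0
  · have hz : (fun e : E => c e • (e : V)) = fun _ => 0 := funext fun e => by
      rw [hzero e, zero_smul]
    have hs0 : s = 0 := hsum.unique (hz ▸ hasSum_zero)
    rw [hs0, norm_zero, c0_sup_zero hzero]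
  · push_neg at hzero
    obtain ⟨e₁, h₁⟩ := hzero
    obtain ⟨e₀, hmax⟩ := exists_max_of_c0 hc e₁ h₁
    haveI : Nonempty E := ⟨e₀⟩
    have h2 : (fun t : Finset E => ‖∑ e ∈ t, c e • (e : V)‖) =ᶠ[atTop]
        fun _ => ‖c e₀‖ := by
      filter_upwards [Filter.eventually_ge_atTop ({e₀} : Finset E)] with t ht
      have hsupeq : (t.sup fun e => ‖c e‖₊) = ‖c e₀‖₊ := by
        refine le_antisymm (Finset.sup_le fun e _ => ?_)
          (Finset.le_sup (f := fun e => ‖c e‖₊) (ht (Finset.mem_singleton_self e₀)))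
        exact hmax e
      have hsa := hE.sum_attach t c
      rw [hsupeq] at hsa
      rw [← coe_nnnorm, hsa, coe_nnnorm]
    have h3 : Tendsto (fun t : Finset E => ‖∑ e ∈ t, c e • (e : V)‖) atTop (𝓝 ‖c e₀‖) :=
      Tendsto.congr' h2.symm tendsto_const_nhds
    rw [tendsto_nhds_unique h1.norm h3, ciSup_eq_of_max hmax]

lemma mem_span_repr {E : Set V} {y : V} (hy : y ∈ Submodule.span k E) :
    ∃ t : Finset E, ∃ d : E → k, y = ∑ e ∈ t, d e • (e : V) := by
  classical
  obtain ⟨l, hl, rfl⟩ := Submodule.mem_span_set.mp hy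
  refine ⟨l.support.preimage Subtype.val Subtype.val_injective.injOn,
    fun e => l e.1, ?_⟩
  rw [Finsupp.sum,
    ← Finset.sum_preimage Subtype.val l.support Subtype.val_injective.injOn
      (fun x => l x • x) ?_]
  intro x hx hxr
  exact absurd (Subtype.range_val ▸ hl hx : x ∈ Set.range (Subtype.val : E → V)) hxr

lemma Orth.exists_repr [CompleteSpace k] {E : Set V} (hE : Orth k E) {v : V}
    (hv : v ∈ closure ((Submodule.span k E : Submodule k V) : Set V)) :
    ∃ c : E → k, IsC0Family k c ∧ HasSum (fun e : E => c e • (e : V)) v := by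
  classical
  have happrox : ∀ n : ℕ, ∃ y ∈ Submodule.span k E, dist v y < (1/2 : ℝ) ^ n := by
    intro n
    have hpos : (0 : ℝ) < (1/2 : ℝ) ^ n := by positivity
    obtain ⟨y, hy1, hy2⟩ := Metric.mem_closure_iff.mp hv _ hpos
    exact ⟨y, hy1, hy2⟩
  choose y hyspan hyclose using happrox
  choose t d hrepr using fun n => mem_span_repr (k := k) (hyspan n)
  set D : ℕ → E → k := fun n e => if e ∈ t n then d n e else 0 with hD
  have hYstep : ∀ n : ℕ, ∀ t' : Finset E, t n ⊆ t' →
      ∑ e ∈ t', D n e • (e : V) = y n := by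
    intro n t' ht'
    rw [← Finset.sum_subset ht' (fun e _ he => by rw [hD]; simp [he])]
    rw [hrepr n]
    exact Finset.sum_congr rfl fun e he => by rw [hD]; simp [he]
  have hsub : ∀ n m : ℕ, y n - y m =
      ∑ e ∈ t n ∪ t m, (D n e - D m e) • (e : V) := by
    intro n m
    rw [← hYstep n (t n ∪ t m) Finset.subset_union_left,
      ← hYstep m (t n ∪ t m) Finset.subset_union_right,
      ← Finset.sum_sub_distrib]
    exact Finset.sum_congr rfl fun e _ => (sub_smul _ _ _).symm
  have hDkey : ∀ e : E, ∀ n m : ℕ, ‖D n e - D m e‖ ≤ ‖y n - y m‖ := by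
    intro e n m
    by_cases he : e ∈ t n ∪ t m
    · have h1 : ‖y n - y m‖₊ = (t n ∪ t m).sup fun e => ‖D n e - D m e‖₊ := by
        rw [hsub n m]; exact hE.sum_attach _ _
      have h2 : ‖D n e - D m e‖₊ ≤ (t n ∪ t m).sup fun e => ‖D n e - D m e‖₊ :=
        Finset.le_sup (f := fun e => ‖D n e - D m e‖₊) he
      rw [← h1] at h2
      exact_mod_cast h2
    · have hn : e ∉ t n := fun h => he (Finset.mem_union_left _ h)
      have hm : e ∉ t m := fun h => he (Finset.mem_union_right _ h)
      rw [hD]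
      simp [hn, hm, norm_nonneg]
  have hyd : ∀ n m : ℕ, n ≤ m → ‖y n - y m‖ < (1/2 : ℝ) ^ n := by
    intro n m hnm
    have h1 : ‖y n - v‖ < (1/2 : ℝ) ^ n := by
      rw [norm_sub_rev, ← dist_eq_norm]; exact hyclose n
    have h2 : ‖v - y m‖ < (1/2 : ℝ) ^ n := by
      rw [← dist_eq_norm]
      refine lt_of_lt_of_le (hyclose m) ?_
      exact pow_le_pow_of_le_one (by norm_num) (by norm_num) hnm
    calc ‖y n - y m‖ = ‖(y n - v) + (v - y m)‖ := by rw [sub_add_sub_cancel]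
      _ ≤ max ‖y n - v‖ ‖v - y m‖ := IsUltrametricDist.norm_add_le_max _ _
      _ < (1/2 : ℝ) ^ n := max_lt h1 h2
  have hcauchy : ∀ e : E, CauchySeq fun n => D n e := by
    intro e
    rw [Metric.cauchySeq_iff']
    intro ε hε
    obtain ⟨N, hN⟩ := exists_pow_lt_of_lt_one hε (by norm_num : (1/2 : ℝ) < 1)
    refine ⟨N, fun n hn => ?_⟩
    rw [dist_eq_norm]
    calc ‖D n e - D N e‖ ≤ ‖y n - y N‖ := hDkey e n N
      _ = ‖y N - y n‖ := norm_sub_rev _ _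
      _ < (1/2 : ℝ) ^ N := hyd N n hn
      _ < ε := hN
  have hlim : ∀ e : E, ∃ x : k, Tendsto (fun n => D n e) atTop (𝓝 x) :=
    fun e => cauchySeq_tendsto_of_complete (hcauchy e)
  choose c hc using hlim
  have hTail : ∀ e : E, ∀ n : ℕ, ‖c e - D n e‖ ≤ (1/2 : ℝ) ^ n := by
    intro e n
    have htt : Tendsto (fun m => ‖D m e - D n e‖) atTop (𝓝 ‖c e - D n e‖) :=
      ((hc e).sub_const (D n e)).norm
    refine le_of_tendsto htt ?_
    filter_upwards [Filter.eventually_ge_atTop n] with m hm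
    calc ‖D m e - D n e‖ = ‖D n e - D m e‖ := norm_sub_rev _ _
      _ ≤ ‖y n - y m‖ := hDkey e n m
      _ ≤ (1/2 : ℝ) ^ n := le_of_lt (hyd n m hm)
  have hc0 : IsC0Family k c := by
    intro ε hε
    obtain ⟨N, hN⟩ := exists_pow_lt_of_lt_one hε (by norm_num : (1/2 : ℝ) < 1)
    refine Set.Finite.subset (t N).finite_toSet ?_
    intro e he
    simp only [Set.mem_setOf_eq] at he
    by_contra hmem
    rw [Finset.mem_coe] at hmem
    have hDN : D N e = 0 := by rw [hD]; simp [hmem]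
    have hle : ‖c e‖ ≤ (1/2 : ℝ) ^ N := by
      have := hTail e N
      rwa [hDN, sub_zero] at this
    linarith
  refine ⟨c, hc0, ?_⟩
  rw [HasSum, Metric.tendsto_nhds]
  intro ε hε
  obtain ⟨N, hN⟩ := exists_pow_lt_of_lt_one hε (by norm_num : (1/2 : ℝ) < 1)
  filter_upwards [Filter.eventually_ge_atTop (t N)] with t' ht'
  have hy : ∑ e ∈ t', D N e • (e : V) = y N := hYstep N t' ht'
  have h1 : ‖∑ e ∈ t', c e • (e : V) - y N‖ ≤ (1/2 : ℝ) ^ N := by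
    rw [← hy, ← Finset.sum_sub_distrib]
    have heq : ∀ e ∈ t', (c e • (e : V) - D N e • (e : V)) = (c e - D N e) • (e : V) :=
      fun e _ => (sub_smul _ _ _).symm
    rw [Finset.sum_congr rfl heq]
    refine IsUltrametricDist.norm_sum_le_of_forall_le_of_nonneg (by positivity)
      fun e _ => ?_
    rw [norm_smul, hE.1 e e.2, mul_one]
    exact hTail e N
  have h2 : ‖y N - v‖ < (1/2 : ℝ) ^ N := by
    rw [norm_sub_rev, ← dist_eq_norm]; exact hyclose N
  rw [dist_eq_norm]
  calc ‖∑ e ∈ t', c e • (e : V) - v‖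
      = ‖(∑ e ∈ t', c e • (e : V) - y N) + (y N - v)‖ := by rw [sub_add_sub_cancel]
    _ ≤ max ‖∑ e ∈ t', c e • (e : V) - y N‖ ‖y N - v‖ :=
        IsUltrametricDist.norm_add_le_max _ _
    _ ≤ (1/2 : ℝ) ^ N := max_le h1 (le_of_lt h2)
    _ < ε := hN

theorem Orth.isOrthonormalSchauderBasis [CompleteSpace V] [CompleteSpace k] {E : Set V}
    (hE : Orth k E) (hspan : closedSpan k E = ⊤) :
    IsOrthonormalSchauderBasis k V E := by
  refine ⟨hE.1, fun c hc => hE.hasSum_of_c0 c hc, fun v => hE.exists_repr ?_⟩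
  have hv : v ∈ closedSpan k E := by rw [hspan]; exact Submodule.mem_top
  rw [← Submodule.topologicalClosure_coe]
  exact hv

lemma exists_maximal_orth :
    ∃ E : Set V, Orth k E ∧ ∀ E', Orth k E' → E ⊆ E' → E' = E := by
  classical
  have hempty : (∅ : Set V) ∈ {E : Set V | Orth k E} := by
    constructor
    · intro e he; exact absurd he (Set.notMem_empty e)
    · intro s hs c
      have hse : s = ∅ := Finset.coe_eq_empty.mp (Set.subset_empty_iff.mp hs)
      subst hse
      simp
  have hchainub : ∀ ch ⊆ {E : Set V | Orth k E}, IsChain (· ⊆ ·) ch → ch.Nonempty →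
      ∃ ub ∈ {E : Set V | Orth k E}, ∀ s ∈ ch, s ⊆ ub := by
    intro ch hchS hchain hchne
    refine ⟨⋃₀ ch, ⟨?_, ?_⟩, fun s hs => Set.subset_sUnion_of_mem hs⟩
    · rintro e ⟨F, hF, he⟩
      exact (hchS hF).1 e he
    · intro s hs c
      have hs' : ↑s ⊆ ⋃ F ∈ ch, F := by rwa [← Set.sUnion_eq_biUnion]
      obtain ⟨F, hFch, hsF⟩ :=
        DirectedOn.exists_mem_subset_of_finset_subset_biUnion hchne
          (hchain.directedOn) hs'
      exact (hchS hFch).2 s hsF c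
  obtain ⟨m, -, hm⟩ := zorn_subset_nonempty {E : Set V | Orth k E} hchainub ∅ hempty
  exact ⟨m, hm.1, fun E' hE' hsub => hm.eq_of_le hE' hsub ▸ rfl⟩

lemma closedSpan_maximal_orth_eq_top
    (hval : ∃ π : k, 0 < ‖π‖ ∧ ‖π‖ < 1 ∧ ∀ c : k, c ≠ 0 → ∃ n : ℤ, ‖c‖ = ‖π‖ ^ n)
    (h3 : ∀ v : V, ∃ c : k, ‖v‖ = ‖c‖)
    {E : Set V} (hE : Orth k E) (hmax : ∀ E', Orth k E' → E ⊆ E' → E' = E) :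
    closedSpan k E = ⊤ := by
  classical
  obtain ⟨π, hπ0, hπ1, hπv⟩ := hval
  set W : Submodule k V := closedSpan k E with hW
  have hWclosed : IsClosed (W : Set V) := Submodule.isClosed_topologicalClosure _
  have hEW : E ⊆ (W : Set V) := fun e he =>
    Submodule.le_topologicalClosure _ (Submodule.subset_span he)
  rw [Submodule.eq_top_iff']
  by_contra hcon
  push_neg at hcon
  obtain ⟨v, hv⟩ := hcon
  have hWne : (W : Set V).Nonempty := ⟨0, W.zero_mem⟩
  have hd : 0 < infDist v (W : Set V) :=
    (hWclosed.notMem_iff_infDist_pos hWne).1 hv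
  set dd : ℝ := infDist v (W : Set V) with hdd
  have hvals : ∀ w, w ∈ W → ∃ n : ℤ, dist v w = ‖π‖ ^ n := by
    intro w hw
    obtain ⟨c, hc⟩ := h3 (v - w)
    have hvw : v - w ≠ 0 := sub_ne_zero.2 (fun h => hv (h ▸ hw))
    have hc0 : c ≠ 0 := by
      intro h
      rw [h, norm_zero] at hc
      exact hvw (norm_eq_zero.mp hc)
    obtain ⟨n, hn⟩ := hπv c hc0
    exact ⟨n, by rw [dist_eq_norm, hc, hn]⟩
  have hdlt : dd < dd / ‖π‖ := by
    rw [lt_div_iff₀ hπ0]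
    nlinarith
  obtain ⟨w₀, hw₀W, hw₀⟩ := (infDist_lt_iff hWne).1 hdlt
  have hmin : ∀ w, w ∈ W → dist v w₀ ≤ dist v w := by
    intro w hw
    by_contra hlt
    push_neg at hlt
    obtain ⟨m, hm⟩ := hvals w₀ hw₀W
    obtain ⟨n, hn⟩ := hvals w hw
    have hmn : m + 1 ≤ n := by
      by_contra hmn
      push_neg at hmn
      have hnm : n ≤ m := by omega
      have hge : ‖π‖ ^ m ≤ ‖π‖ ^ n := zpow_le_zpow_right_of_le_one₀ hπ0 (le_of_lt hπ1) hnm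
      rw [← hm, ← hn] at hge
      linarith
    have h1 : dist v w ≤ dist v w₀ * ‖π‖ := by
      rw [hn, hm]
      calc ‖π‖ ^ n ≤ ‖π‖ ^ (m + 1) :=
            zpow_le_zpow_right_of_le_one₀ hπ0 (le_of_lt hπ1) hmn
        _ = ‖π‖ ^ m * ‖π‖ := by rw [zpow_add_one₀ (ne_of_gt hπ0)]
    have h2 : dist v w₀ * ‖π‖ < dd := by
      calc dist v w₀ * ‖π‖ < (dd / ‖π‖) * ‖π‖ := mul_lt_mul_of_pos_right hw₀ hπ0
        _ = dd := div_mul_cancel₀ dd (ne_of_gt hπ0)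
    have h3' : dd ≤ dist v w := infDist_le_dist_of_mem hw
    linarith
  set u : V := v - w₀ with hu
  have hu0 : u ≠ 0 := sub_ne_zero.2 (fun h => hv (h ▸ hw₀W))
  obtain ⟨c, hc⟩ := h3 u
  have hc0 : c ≠ 0 := by
    intro h
    rw [h, norm_zero] at hc
    exact hu0 (norm_eq_zero.mp hc)
  set e : V := c⁻¹ • u with he
  have hnc : ‖c‖ ≠ 0 := norm_ne_zero_iff.2 hc0
  have he1 : ‖e‖ = 1 := by
    rw [he, norm_smul, norm_inv, ← hc, inv_mul_cancel₀ (norm_ne_zero_iff.2 hu0)]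
  have hue : u = c • e := by
    rw [he, smul_smul, mul_inv_cancel₀ hc0, one_smul]
  have heW : e ∉ (W : Set V) := by
    intro h
    apply hv
    have huW : u ∈ W := hue ▸ W.smul_mem c h
    have hvW := W.add_mem huW hw₀W
    rwa [hu, sub_add_cancel] at hvW
  have hlow : ∀ u', u' ∈ W → 1 ≤ ‖e + u'‖ := by
    intro u' hu'
    have hmem : w₀ - c • u' ∈ W := W.sub_mem hw₀W (W.smul_mem c hu')
    have heq : e + u' = c⁻¹ • (v - (w₀ - c • u')) := by
      have hveq : v - (w₀ - c • u') = u + c • u' := by rw [hu]; abel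
      rw [hveq, smul_add, smul_smul, inv_mul_cancel₀ hc0, one_smul, ← he]
    have h4 : dist v w₀ ≤ ‖v - (w₀ - c • u')‖ := by
      rw [← dist_eq_norm]; exact hmin _ hmem
    have h5 : ‖c‖ ≤ ‖v - (w₀ - c • u')‖ := by
      refine le_trans (le_of_eq ?_) h4
      rw [dist_eq_norm, ← hu, hc]
    rw [heq, norm_smul, norm_inv]
    rw [← inv_mul_cancel₀ hnc]
    exact mul_le_mul_of_nonneg_left h5 (inv_nonneg.2 (norm_nonneg c))
  have hkey : ∀ a : k, ∀ w, w ∈ W → ‖a • e + w‖ = max ‖a‖ ‖w‖ := by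
    intro a w hw
    rcases eq_or_ne a 0 with rfl | ha
    · rw [zero_smul, zero_add, norm_zero, max_eq_right (norm_nonneg w)]
    · have hge : ‖a‖ ≤ ‖a • e + w‖ := by
        have heq2 : a • e + w = a • (e + a⁻¹ • w) := by
          rw [smul_add, smul_inv_smul₀ ha]
        rw [heq2, norm_smul]
        have hl := hlow (a⁻¹ • w) (W.smul_mem _ hw)
        nlinarith [norm_nonneg a]
      rcases le_or_gt ‖w‖ ‖a‖ with hle | hlt
      · rw [max_eq_left hle]
        refine le_antisymm ?_ hge
        calc ‖a • e + w‖ ≤ max ‖a • e‖ ‖w‖ := IsUltrametricDist.norm_add_le_max _ _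
          _ ≤ ‖a‖ := by rw [norm_smul, he1, mul_one]; exact max_le (le_refl _) hle
      · rw [max_eq_right (le_of_lt hlt)]
        have hne2 : ‖a • e‖ ≠ ‖w‖ := by rw [norm_smul, he1, mul_one]; exact ne_of_lt hlt
        have hme := IsUltrametricDist.norm_add_eq_max_of_norm_ne_norm hne2
        rw [hme, norm_smul, he1, mul_one, max_eq_right (le_of_lt hlt)]
  have horth : Orth k (insert e E) := by
    constructor
    · rintro x hx
      rcases Set.mem_insert_iff.1 hx with rfl | hxE
      · exact he1
      · exact hE.1 x hxE
    · intro s hs c'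
      by_cases hes : e ∈ s
      · have hs'E : ↑(s.erase e) ⊆ E := by
          intro x hx
          have hx' := Finset.mem_erase.1 (Finset.mem_coe.1 hx)
          rcases Set.mem_insert_iff.1 (hs (Finset.mem_coe.2 hx'.2)) with rfl | hxE
          · exact absurd rfl hx'.1
          · exact hxE
        have hwmem : (∑ x ∈ s.erase e, c' x • x) ∈ W := by
          refine Submodule.le_topologicalClosure _ ?_
          exact Submodule.sum_mem _ fun x hx => Submodule.smul_mem _ _
            (Submodule.subset_span (hs'E hx))
        have hsum2 : ∑ x ∈ s, c' x • x = c' e • e + ∑ x ∈ s.erase e, c' x • x :=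
          (Finset.add_sum_erase s (fun x => c' x • x) hes).symm
        have hkeyeq := hkey (c' e) _ hwmem
        have hsup : (s.sup fun v => ‖c' v‖₊)
            = ‖c' e‖₊ ⊔ ((s.erase e).sup fun v => ‖c' v‖₊) := by
          conv_lhs => rw [← Finset.insert_erase hes]
          rw [Finset.sup_insert]
        rw [hsum2, hsup, ← hE.2 (s.erase e) hs'E c']
        apply NNReal.coe_injective
        simp only [coe_nnnorm, NNReal.coe_max]
        exact hkeyeq
      · have hsE : ↑s ⊆ E := by
          intro x hx
          rcases Set.mem_insert_iff.1 (hs hx) with rfl | hxE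
          · exact absurd (Finset.mem_coe.1 hx) hes
          · exact hxE
        exact hE.2 s hsE c'
  have hins := hmax _ horth (Set.subset_insert e E)
  have heE : e ∈ E := hins ▸ Set.mem_insert e E
  exact heW (hEW heE)

theorem isFreeBanach_of_norms [CompleteSpace V] [CompleteSpace k]
    (hval : ∃ π : k, 0 < ‖π‖ ∧ ‖π‖ < 1 ∧ ∀ c : k, c ≠ 0 → ∃ n : ℤ, ‖c‖ = ‖π‖ ^ n)
    (h3 : ∀ v : V, ∃ c : k, ‖v‖ = ‖c‖) : IsFreeBanach k V := by
  obtain ⟨E, hE, hmax⟩ := exists_maximal_orth (k := k) (V := V)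
  exact ⟨E, hE.isOrthonormalSchauderBasis (closedSpan_maximal_orth_eq_top hval h3 hE hmax)⟩

theorem norms_of_isFreeBanach (hfree : IsFreeBanach k V) (v : V) :
    ∃ c : k, ‖v‖ = ‖c‖ := by
  obtain ⟨E, hE⟩ := hfree
  obtain ⟨c, hc, hsum⟩ := hE.2.2 v
  obtain ⟨s, hs, hnorm⟩ := hE.2.1 c hc
  have hsv : s = v := hs.unique hsum
  subst hsv
  by_cases h : ∀ e : E, c e = 0
  · exact ⟨0, by rw [hnorm, c0_sup_zero h, norm_zero]⟩
  · push_neg at h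
    obtain ⟨e₁, h₁⟩ := h
    obtain ⟨e₀, hm⟩ := exists_max_of_c0 hc e₁ h₁
    haveI : Nonempty E := ⟨e₀⟩
    exact ⟨c e₀, by rw [hnorm, ciSup_eq_of_max hm]⟩

theorem exists_isometry_of_rank_one (h3 : ∀ v : V, ∃ c : k, ‖v‖ = ‖c‖)
    (hr : Module.rank k V = 1) : Nonempty (V ≃ₗᵢ[k] k) := by
  obtain ⟨v₀, hv₀, hspan⟩ := rank_eq_one_iff.mp hr
  obtain ⟨c, hc⟩ := h3 v₀
  have hc0 : c ≠ 0 := by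
    intro h
    rw [h, norm_zero] at hc
    exact hv₀ (norm_eq_zero.mp hc)
  set e : V := c⁻¹ • v₀ with he
  have he1 : ‖e‖ = 1 := by
    rw [he, norm_smul, norm_inv, ← hc, inv_mul_cancel₀ (norm_ne_zero_iff.2 hv₀)]
  have he0 : e ≠ 0 := by
    intro h
    rw [h, norm_zero] at he1
    exact one_ne_zero he1.symm
  have hspan' : ∀ v : V, ∃ r : k, r • e = v := by
    intro v
    obtain ⟨r, hr'⟩ := hspan v
    exact ⟨r * c, by rw [he, smul_smul, mul_assoc, mul_inv_cancel₀ hc0, mul_one, hr']⟩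
  have hbij : Function.Bijective (LinearMap.toSpanSingleton k V e) := by
    constructor
    · intro a b hab
      simp only [LinearMap.toSpanSingleton_apply] at hab
      exact smul_left_injective k he0 hab
    · intro v
      obtain ⟨r, hr'⟩ := hspan' v
      exact ⟨r, by simpa [LinearMap.toSpanSingleton_apply] using hr'⟩
  let L := LinearEquiv.ofBijective (LinearMap.toSpanSingleton k V e) hbij
  refine ⟨LinearIsometryEquiv.symm { toLinearEquiv := L, norm_map' := ?_ }⟩
  intro a
  show ‖a • e‖ = ‖a‖
  rw [norm_smul, he1, mul_one]

end Aux

section Statement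

variable (k : Type u) [NormedField k] [IsUltrametricDist k]

/-- The valuation ring `O_k = {c : ‖c‖ ≤ 1}` of `k`, as a subring. -/
def okSubring : Subring k where
  carrier := {c : k | ‖c‖ ≤ 1}
  zero_mem' := by simp
  one_mem' := by simp
  add_mem' {a b} ha hb := le_trans (IsUltrametricDist.norm_add_le_max a b) (max_le ha hb)
  neg_mem' {a} ha := by simpa using ha
  mul_mem' {a b} ha hb := by
    simp only [Set.mem_setOf_eq, norm_mul] at *
    exact mul_le_one₀ ha (norm_nonneg _) hb

/-- The maximal ideal `{c : ‖c‖ < 1}` of the valuation ring `O_k`. -/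
def maxIdealOk : Ideal (okSubring k) where
  carrier := {c : okSubring k | ‖(c : k)‖ < 1}
  zero_mem' := by simp
  add_mem' {a b} ha hb := by
    simp only [Set.mem_setOf_eq] at *
    calc ‖((a : k) + (b : k))‖ ≤ max ‖(a : k)‖ ‖(b : k)‖ :=
          IsUltrametricDist.norm_add_le_max _ _
      _ < 1 := max_lt ha hb
  smul_mem' c x hx := by
    simp only [Set.mem_setOf_eq, smul_eq_mul] at *
    calc ‖((c : k) * (x : k))‖ = ‖(c : k)‖ * ‖(x : k)‖ := norm_mul _ _
      _ ≤ 1 * ‖(x : k)‖ := by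
          exact mul_le_mul_of_nonneg_right c.2 (norm_nonneg _)
      _ < 1 := by simpa using hx

variable (V : Type u) [NormedAddCommGroup V] [IsUltrametricDist V]
  [NormedSpace k V] [CompleteSpace V] [CompleteSpace k]

/-- If `k` is a local field (the value group is infinite cyclic and the residue field is
finite), then for a Banach `k`-vector space `V` the following are equivalent:
(1) `V` is free; (2) `V` is almost free and is isometrically isomorphic to `k` if it is
one-dimensional; (3) `‖V‖ ⊆ |k|`. -/
theorem free_iff_of_local_field
    (hval : ∃ π : k, 0 < ‖π‖ ∧ ‖π‖ < 1 ∧ ∀ c : k, c ≠ 0 → ∃ n : ℤ, ‖c‖ = ‖π‖ ^ n)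
    (hres : Finite ((okSubring k) ⧸ (maxIdealOk k))) :
    (IsFreeBanach k V ↔
      (IsAlmostFree k V ∧ (Module.rank k V = 1 → Nonempty (V ≃ₗᵢ[k] k)))) ∧
    (IsFreeBanach k V ↔ ∀ v : V, ∃ c : k, ‖v‖ = ‖c‖) := by
  classical
  have hiff2 : IsFreeBanach k V ↔ ∀ v : V, ∃ c : k, ‖v‖ = ‖c‖ :=
    ⟨fun h v => norms_of_isFreeBanach h v, fun h => isFreeBanach_of_norms hval h⟩
  obtain ⟨π, hπ0, hπ1, hπv⟩ := hval
  have hval' : ∃ π : k, 0 < ‖π‖ ∧ ‖π‖ < 1 ∧ ∀ c : k, c ≠ 0 → ∃ n : ℤ, ‖c‖ = ‖π‖ ^ n :=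
    ⟨π, hπ0, hπ1, hπv⟩
  refine ⟨?_, hiff2⟩
  constructor
  · intro hfree
    have h3 : ∀ v : V, ∃ c : k, ‖v‖ = ‖c‖ := fun v => norms_of_isFreeBanach hfree v
    constructor
    · intro S hS
      haveI : CompleteSpace (closedSpan k S) :=
        (Submodule.isClosed_topologicalClosure (Submodule.span k S)).completeSpace_coe
      refine isFreeBanach_of_norms hval' ?_
      intro w
      obtain ⟨c, hc⟩ := h3 (w : V)
      exact ⟨c, hc⟩
    · intro hrank
      exact exists_isometry_of_rank_one h3 hrank
  · rintro ⟨halmost, h1⟩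
    rw [hiff2]
    intro v
    rcases le_or_gt (bRank k V) 1 with hb | hb
    · have hne : {c : Cardinal.{u} | ∃ S : Set V, #S = c ∧ closedSpan k S = ⊤}.Nonempty := by
        refine ⟨#(Set.univ : Set V), Set.univ, rfl, ?_⟩
        rw [closedSpan, Submodule.span_univ]
        exact le_antisymm le_top (Submodule.le_topologicalClosure ⊤)
      obtain ⟨S₀, hcard, htop⟩ := csInf_mem hne
      have hS₀ : (#S₀ : Cardinal) ≤ 1 := by rw [hcard]; exact hb
      have hsub : S₀.Subsingleton := Cardinal.mk_le_one_iff_set_subsingleton.mp hS₀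
      rcases hsub.eq_empty_or_singleton with rfl | ⟨x, rfl⟩
      · have hbot : closedSpan k (∅ : Set V) = ⊥ := by
          rw [closedSpan, Submodule.span_empty]
          refine le_antisymm ?_ (Submodule.le_topologicalClosure _)
          intro z hz
          have hz' : z ∈ closure (((⊥ : Submodule k V) : Submodule k V) : Set V) := by
            rw [← Submodule.topologicalClosure_coe]; exact hz
          rw [Submodule.bot_coe, isClosed_singleton.closure_eq] at hz'
          simpa using hz'
        have hvv : v ∈ (⊥ : Submodule k V) := by
          rw [← hbot, htop]; exact Submodule.mem_top
        rw [Submodule.mem_bot] at hvv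
        exact ⟨0, by rw [hvv, norm_zero, norm_zero]⟩
      · letI : NontriviallyNormedField k :=
          { (inferInstance : NormedField k) with
            non_trivial := ⟨π⁻¹, by rw [norm_inv]; exact (one_lt_inv₀ hπ0).2 hπ1⟩ }
        haveI := FiniteDimensional.span_of_finite k (Set.finite_singleton x)
        have hclosed : IsClosed ((Submodule.span k ({x} : Set V) : Submodule k V) : Set V) :=
          Submodule.closed_of_finiteDimensional _
        have hspan : Submodule.span k ({x} : Set V) = ⊤ := by
          rw [← htop, closedSpan]
          exact le_antisymm (Submodule.le_topologicalClosure _)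
            (Submodule.topologicalClosure_minimal _ le_rfl hclosed)
        rcases eq_or_ne x 0 with rfl | hx0
        · have hvv : v ∈ Submodule.span k ({(0 : V)} : Set V) := by
            rw [hspan]; exact Submodule.mem_top
          rw [Submodule.span_zero_singleton, Submodule.mem_bot] at hvv
          exact ⟨0, by rw [hvv, norm_zero, norm_zero]⟩
        · have hall : ∀ w : V, ∃ a : k, a • x = w := by
            intro w
            have hw : w ∈ Submodule.span k ({x} : Set V) := by
              rw [hspan]; exact Submodule.mem_top
            rwa [Submodule.mem_span_singleton] at hw
          have hrank : Module.rank k V = 1 := rank_eq_one x hx0 hall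
          obtain ⟨φ⟩ := h1 hrank
          exact ⟨φ v, (φ.norm_map v).symm⟩
    · have hcard : #({v} : Set V) < bRank k V := by
        rw [Cardinal.mk_singleton]; exact hb
      have hfree := halmost {v} hcard
      have hvmem : v ∈ closedSpan k ({v} : Set V) :=
        Submodule.le_topologicalClosure _ (Submodule.subset_span (Set.mem_singleton v))
      obtain ⟨c, hc⟩ := norms_of_isFreeBanach hfree ⟨v, hvmem⟩
      exact ⟨c, hc⟩

end Statement
end
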